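/- arXiv:1901.06929 — 3 statements merged into one kernel-verified Lean document; each statement's English description precedes it below -/
import Mathlib

section
/- Let RC_K be a right-angled Coxeter group (a group with generators g_1, ..., g_m satisfying g_i² = 1 for all i, and g_i g_j = g_j g_i for pairs {i,j} in a prescribed graph). Then for every k ≥ 1, the square of any element of γ_k(RC_K) lies in γ_{k+1}(RC_K). -/
/-- The group commutator with the convention `(a, b) = a⁻¹ b⁻¹ a b`. -/
def gcomm {G : Type*} [Group G] (a b : G) : G := a⁻¹ * b⁻¹ * a * b

/-- The defining relations of the right-angled Coxeter group of a graph `E` on `m` vertices: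
`g_i² = 1` for every `i` and `g_i g_j = g_j g_i` whenever `{i, j}` is an edge. -/
def racgRels (m : ℕ) (E : Fin m → Fin m → Prop) : Set (FreeGroup (Fin m)) :=
  {w | (∃ i, w = FreeGroup.of i ^ 2) ∨
    ∃ i j, E i j ∧ w = gcomm (FreeGroup.of i) (FreeGroup.of j)}

/-- The right-angled Coxeter group `RC_K`. -/
abbrev RACG (m : ℕ) (E : Fin m → Fin m → Prop) := PresentedGroup (racgRels m E)

/-! In a group generated by involutions, fix `a ∈ γ_n`. Modulo `γ_{n+2}` the map `b ↦ ⁅a, b⁆` is a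
homomorphism into the center; it kills the commutator subgroup and the squares of the generators,
hence all squares, so `⁅a, b⁆² ∈ γ_{n+2}`. As `γ_{n+1}` is generated by such commutators and is
central modulo `γ_{n+2}`, squaring is multiplicative on it modulo `γ_{n+2}`, which gives
`x² ∈ γ_{n+2}` for `x ∈ γ_{n+1}`; the first step `x² ∈ γ_1` is the same argument in `G / γ_1`. -/

open Subgroup
open scoped commutatorElement

section

variable {G : Type*} [Group G]

theorem sq_mem_of_mem_closure {N : Subgroup G} {T : Set G} (hT : ⁅closure T, ⊤⁆ ≤ N)
    (hsq : ∀ t ∈ T, t ^ 2 ∈ N) {x : G} (hx : x ∈ closure T) : x ^ 2 ∈ N := by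
  induction hx using closure_induction with
  | mem t ht => exact hsq t ht
  | one => simpa only [one_pow] using N.one_mem
  | mul x y hx _ hx2 hy2 =>
    have hcomm : ⁅x⁻¹, y⁆ ∈ N := hT (commutator_mem_commutator (inv_mem hx) (mem_top y))
    have hid : (x * y) ^ 2 = x ^ 2 * ⁅x⁻¹, y⁆ * y ^ 2 := by
      simp only [pow_two, commutatorElement_def]; group
    rw [hid]
    exact mul_mem (mul_mem hx2 hcomm) hy2
  | inv x _ hx2 => simpa only [inv_pow] using inv_mem hx2

theorem commutator_le_ker_of_forall_mem_center {H : Type*} [Group H] (f : H →* G)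
    (hf : ∀ x, f x ∈ center G) : commutator H ≤ f.ker :=
  commutator_le.2 fun g _ h _ => by
    rw [MonoidHom.mem_ker, map_commutatorElement, commutatorElement_eq_one_iff_commute]
    exact mem_center_iff.1 (hf h) _

@[simps]
def commutatorElementHom (a : G) (ha : ∀ g, ⁅a, g⁆ ∈ center G) : G →* G where
  toFun g := ⁅a, g⁆
  map_one' := commutatorElement_one_right a
  map_mul' g h := by
    have hid : ⁅a, g * h⁆ = ⁅a, g⁆ * (g * ⁅a, h⁆ * g⁻¹) := by
      simp only [commutatorElement_def]; group
    rw [hid, mem_center_iff.1 (ha h) g, mul_inv_cancel_right]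

theorem mk_mem_center_of_mem_lowerCentralSeries {n : ℕ} {x : G}
    (hx : x ∈ (⊤ : Subgroup G).lowerCentralSeries n) :
    (x : G ⧸ (⊤ : Subgroup G).lowerCentralSeries (n + 1)) ∈ center _ := by
  refine mem_center_iff.2 (QuotientGroup.induction_on · fun g => ?_)
  refine (commutatorElement_eq_one_iff_mul_comm.1 ?_).symm
  rw [← QuotientGroup.mk'_apply, ← QuotientGroup.mk'_apply, ← map_commutatorElement,
    QuotientGroup.mk'_apply, QuotientGroup.eq_one_iff]
  exact commutator_mem_commutator hx (mem_top g)

variable {S : Set G} (hS : closure S = ⊤) (hsq : ∀ s ∈ S, s ^ 2 = 1)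
include hS hsq

theorem sq_mem_of_closure_eq_top {N : Subgroup G} (hN : commutator G ≤ N) (x : G) : x ^ 2 ∈ N :=
  sq_mem_of_mem_closure (by rwa [hS]) (fun s hs => hsq s hs ▸ N.one_mem) (hS ▸ mem_top x)

theorem sq_commutatorElement_mem_lowerCentralSeries {n : ℕ} {a : G}
    (ha : a ∈ (⊤ : Subgroup G).lowerCentralSeries n) (b : G) :
    ⁅a, b⁆ ^ 2 ∈ (⊤ : Subgroup G).lowerCentralSeries (n + 2) := by
  set N := (⊤ : Subgroup G).lowerCentralSeries (n + 2)
  let π := QuotientGroup.mk' N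
  have hπ : ∀ g, ⁅π a, π g⁆ ∈ center (G ⧸ N) := fun g => by
    rw [← map_commutatorElement]
    exact mk_mem_center_of_mem_lowerCentralSeries (commutator_mem_commutator ha (mem_top g))
  have hcentral : ∀ q, ⁅π a, q⁆ ∈ center (G ⧸ N) := fun q =>
    QuotientGroup.induction_on q hπ
  let φ := (commutatorElementHom (π a) hcentral).comp π
  have hb : b ^ 2 ∈ φ.ker :=
    sq_mem_of_closure_eq_top hS hsq (commutator_le_ker_of_forall_mem_center φ hπ) b
  rwa [MonoidHom.mem_ker, map_pow, MonoidHom.comp_apply, commutatorElementHom_apply,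
    ← map_commutatorElement, ← map_pow, QuotientGroup.mk'_apply, QuotientGroup.eq_one_iff] at hb

theorem sq_mem_lowerCentralSeries_succ_of_closure_eq_top {n : ℕ} {x : G}
    (hx : x ∈ (⊤ : Subgroup G).lowerCentralSeries n) :
    x ^ 2 ∈ (⊤ : Subgroup G).lowerCentralSeries (n + 1) := by
  cases n with
  | zero => exact sq_mem_of_closure_eq_top hS hsq le_rfl x
  | succ n =>
    refine sq_mem_of_mem_closure le_rfl ?_ hx
    rintro _ ⟨a, ha, b, -, rfl⟩
    exact sq_commutatorElement_mem_lowerCentralSeries hS hsq ha b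

end

theorem RACG.of_sq_eq_one {m : ℕ} {E : Fin m → Fin m → Prop} (i : Fin m) :
    (PresentedGroup.of i : RACG m E) ^ 2 = 1 :=
  (map_pow (PresentedGroup.mk _) _ 2).symm.trans (PresentedGroup.one_of_mem (Or.inl ⟨i, rfl⟩))

theorem sq_mem_lowerCentralSeries_succ_racg_general (m : ℕ) (E : Fin m → Fin m → Prop)
    (k : ℕ) (a : RACG m E)
    (ha : a ∈ (⊤ : Subgroup (RACG m E)).lowerCentralSeries (k - 1)) :
    a ^ 2 ∈ (⊤ : Subgroup (RACG m E)).lowerCentralSeries k := by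
  cases k with
  | zero => exact mem_top _
  | succ n =>
    refine sq_mem_lowerCentralSeries_succ_of_closure_eq_top
      (PresentedGroup.closure_range_of _) ?_ ha
    rintro _ ⟨i, rfl⟩
    exact RACG.of_sq_eq_one i

/-- The square of any element of `γ_k(RC_K)` lies in `γ_{k+1}(RC_K)`
(here `γ_k = lowerCentralSeries _ (k - 1)`). -/
theorem sq_mem_lowerCentralSeries_succ_racg (m : ℕ) (E : Fin m → Fin m → Prop)
    (k : ℕ) (hk : 1 ≤ k) (a : RACG m E)
    (ha : a ∈ (⊤ : Subgroup (RACG m E)).lowerCentralSeries (k - 1)) :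
    a ^ 2 ∈ (⊤ : Subgroup (RACG m E)).lowerCentralSeries k :=
  sq_mem_lowerCentralSeries_succ_racg_general m E k a ha
end

section
/- Let G = Z/2 * Z/2 be the free product of two cyclic groups of order 2 with generators g_1, g_2. Then for every k ≥ 2, γ_k(G) is an infinite cyclic group generated by the left-nested commutator (g_1, g_2, g_1, ..., g_1) of length k. -/
/-- The free product `ℤ/2 * ℤ/2`, presented with two generators of order 2. -/
abbrev Z2Z2 := PresentedGroup {w : FreeGroup (Fin 2) | ∃ i, w = FreeGroup.of i ^ 2}

/-- The left-nested commutator `(g₁, g₂, g₁, …, g₁)` of length `k` (for `k ≥ 2`). -/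
def nestedC (k : ℕ) : Z2Z2 :=
  (fun x => gcomm x (PresentedGroup.of 0))^[k - 2]
    (gcomm (PresentedGroup.of 0) (PresentedGroup.of 1))

/-!
`ℤ/2 * ℤ/2` is the infinite dihedral group `DihedralGroup 0`: `g₁ ↦ sr 0`, `g₂ ↦ sr 1`, with inverse
`r i ↦ (g₁g₂)^i`, `sr i ↦ g₁(g₁g₂)^i`. In every dihedral group the commutator of a rotation `r i`
with a reflection is `r (±2i)`, so `⁅⟨r i⟩, ⊤⁆ = ⟨r (2i)⟩`, and inductively `γ_{j+2} = ⟨r (2^(j+1))⟩`.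
The nested commutator of length `j + 2` is `r ((-2)^j · 2)`, which generates the same subgroup and,
being a nontrivial rotation of `DihedralGroup 0`, has infinite order.
-/

open Subgroup
open scoped commutatorElement

theorem gcomm_eq_commutatorElement {G : Type*} [Group G] (a b : G) :
    gcomm a b = ⁅a⁻¹, b⁻¹⁆ := by
  rw [commutatorElement_def, inv_inv, inv_inv, gcomm]

theorem map_gcomm {G H : Type*} [Group G] [Group H] (f : G →* H) (a b : G) :
    f (gcomm a b) = gcomm (f a) (f b) := by
  simp only [gcomm, map_mul, map_inv]

namespace DihedralGroup

variable {n : ℕ}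

theorem commutatorElement_r_r (i j : ZMod n) : ⁅r i, r j⁆ = 1 := by
  simp only [commutatorElement_def, inv_r, r_mul_r, one_def]; ring_nf

theorem commutatorElement_r_sr (i j : ZMod n) : ⁅r i, sr j⁆ = r (2 * i) := by
  simp only [commutatorElement_def, inv_r, inv_sr, r_mul_sr, sr_mul_r, sr_mul_sr]; ring_nf

theorem commutatorElement_sr_r (i j : ZMod n) : ⁅sr i, r j⁆ = r (2 * -j) := by
  simp only [commutatorElement_def, inv_r, inv_sr, r_mul_r, sr_mul_r, sr_mul_sr]; ring_nf

theorem commutatorElement_sr_sr (i j : ZMod n) : ⁅sr i, sr j⁆ = r (2 * (j - i)) := by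
  simp only [commutatorElement_def, inv_sr, r_mul_sr, sr_mul_sr]; ring_nf

theorem r_mul_mem_zpowers (c i : ZMod n) : r (c * i) ∈ zpowers (r c) :=
  ⟨(i.cast : ℤ), by simp only [r_zpow, ZMod.intCast_zmod_cast]⟩

theorem commutator_zpowers_r_top (i : ZMod n) :
    ⁅zpowers (r i), (⊤ : Subgroup (DihedralGroup n))⁆ = zpowers (r (2 * i)) := by
  refine le_antisymm ?_ ?_
  · rw [commutator_le]
    rintro _ ⟨m, rfl⟩ g -
    simp only [r_zpow]
    rcases g with j | j
    · rw [commutatorElement_r_r]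
      exact one_mem _
    · rw [commutatorElement_r_sr, ← mul_assoc]
      exact r_mul_mem_zpowers _ _
  · rw [zpowers_le, ← commutatorElement_r_sr i 0]
    exact commutator_mem_commutator (mem_zpowers _) (mem_top _)

theorem commutator_eq_zpowers_r_two : commutator (DihedralGroup n) = zpowers (r 2) := by
  refine le_antisymm ?_ ?_
  · rw [commutator_def, commutator_le]
    rintro (g | g) - (h | h) -
    · rw [commutatorElement_r_r]; exact one_mem _
    · rw [commutatorElement_r_sr]; exact r_mul_mem_zpowers _ _
    · rw [commutatorElement_sr_r]; exact r_mul_mem_zpowers _ _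
    · rw [commutatorElement_sr_sr]; exact r_mul_mem_zpowers _ _
  · rw [← mul_one (2 : ZMod n), ← commutator_zpowers_r_top, commutator_def]
    exact commutator_mono le_top le_rfl

theorem lowerCentralSeries_succ_eq_zpowers_r (j : ℕ) :
    (⊤ : Subgroup (DihedralGroup n)).lowerCentralSeries (j + 1) = zpowers (r (2 ^ (j + 1))) := by
  induction j with
  | zero => rw [top_lowerCentralSeries_one, commutator_eq_zpowers_r_two, zero_add, pow_one]
  | succ j ih =>
    rw [Subgroup.lowerCentralSeries_succ, ih, commutator_zpowers_r_top, pow_succ' 2 (j + 1)]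

theorem zpowers_r_neg (i : ZMod n) : zpowers (r (-i)) = zpowers (r i) := by
  rw [← inv_r, zpowers_inv]

theorem zpowers_r_neg_two_pow_mul_two (j : ℕ) :
    zpowers (r ((-2) ^ j * 2 : ZMod n)) = zpowers (r (2 ^ (j + 1))) := by
  rcases neg_one_pow_eq_or (ZMod n) j with h | h
  · rw [neg_pow, h, one_mul, pow_succ]
  · rw [neg_pow, h, ← zpowers_r_neg, pow_succ]
    ring_nf

theorem gcomm_r_sr (i j : ZMod n) : gcomm (r i) (sr j) = r (-2 * i) := by
  rw [gcomm_eq_commutatorElement, inv_r, inv_sr, commutatorElement_r_sr, neg_mul_comm]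

theorem iterate_gcomm_r_sr (m : ℕ) (i j : ZMod n) :
    (fun x => gcomm x (sr j))^[m] (r i) = r ((-2) ^ m * i) := by
  induction m with
  | zero => rw [Function.iterate_zero_apply, pow_zero, one_mul]
  | succ m ih => rw [Function.iterate_succ_apply', ih, gcomm_r_sr, pow_succ', mul_assoc]

theorem not_isOfFinOrder_r {i : ZMod 0} (hi : i ≠ 0) : ¬IsOfFinOrder (r i) := by
  rw [isOfFinOrder_iff_pow_eq_one]
  rintro ⟨m, hm, h⟩
  rw [r_pow, one_def, r.injEq] at h
  exact hi (by simpa [hm.ne'] using h)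

section Lift

variable {G : Type*} [Group G] {a b : G}

theorem zpow_mul_of_mul_self (ha : a * a = 1) (hb : b * b = 1) (i : ℤ) :
    (a * b) ^ i * a = a * (a * b) ^ (-i) := by
  have hconj : a * (a * b) * a⁻¹ = (a * b)⁻¹ := by
    rw [inv_eq_of_mul_eq_one_right ha, mul_inv_rev, inv_eq_of_mul_eq_one_right ha,
      inv_eq_of_mul_eq_one_right hb, ← mul_assoc, ha, one_mul]
  rw [zpow_neg, ← inv_zpow, ← hconj, conj_zpow, inv_eq_of_mul_eq_one_right ha, ← mul_assoc,
    ← mul_assoc, ha, one_mul]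

def lift (ha : a * a = 1) (hb : b * b = 1) : DihedralGroup 0 →* G where
  -- `ZMod 0` is `ℤ` by definition, but not reducibly so
  toFun
    | r i => (a * b) ^ (show ℤ from i)
    | sr i => a * (a * b) ^ (show ℤ from i)
  map_one' := zpow_zero _
  map_mul' := by
    rintro (⟨i : ℤ⟩ | ⟨i : ℤ⟩) (⟨j : ℤ⟩ | ⟨j : ℤ⟩)
    · exact zpow_add _ i j
    · change a * (a * b) ^ (j - i) = (a * b) ^ i * (a * (a * b) ^ j)
      rw [← mul_assoc, zpow_mul_of_mul_self ha hb, mul_assoc, ← zpow_add, neg_add_eq_sub]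
    · change a * (a * b) ^ (i + j) = a * (a * b) ^ i * (a * b) ^ j
      rw [mul_assoc, zpow_add]
    · change (a * b) ^ (j - i) = a * (a * b) ^ i * (a * (a * b) ^ j)
      rw [mul_assoc, ← mul_assoc _ a, zpow_mul_of_mul_self ha hb, ← mul_assoc, ← mul_assoc, ha,
        one_mul, ← zpow_add, neg_add_eq_sub]

theorem lift_r (ha : a * a = 1) (hb : b * b = 1) (i : ℤ) :
    lift ha hb (r i) = (a * b) ^ i := rfl

theorem lift_sr (ha : a * a = 1) (hb : b * b = 1) (i : ℤ) :
    lift ha hb (sr i) = a * (a * b) ^ i := rfl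

theorem lift_sr_zero (ha : a * a = 1) (hb : b * b = 1) : lift ha hb (sr 0) = a := by
  change a * (a * b) ^ (0 : ℤ) = a
  rw [zpow_zero, mul_one]

theorem lift_sr_one (ha : a * a = 1) (hb : b * b = 1) : lift ha hb (sr 1) = b := by
  change a * (a * b) ^ (1 : ℤ) = b
  rw [zpow_one, ← mul_assoc, ha, one_mul]

end Lift

end DihedralGroup

namespace Z2Z2

open DihedralGroup

theorem of_mul_self (i : Fin 2) : (PresentedGroup.of i : Z2Z2) * PresentedGroup.of i = 1 := by
  rw [← pow_two]
  exact (QuotientGroup.eq_one_iff (FreeGroup.of i ^ 2)).mpr (subset_normalClosure ⟨i, rfl⟩)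

def toDihedralGroup : Z2Z2 →* DihedralGroup 0 :=
  PresentedGroup.toGroup (f := ![sr 0, sr 1]) <| by
    rintro _ ⟨i, rfl⟩
    rw [map_pow, FreeGroup.lift_apply_of, pow_two]
    fin_cases i <;> exact sr_mul_self _

theorem toDihedralGroup_of_zero : toDihedralGroup (PresentedGroup.of 0) = sr 0 :=
  PresentedGroup.toGroup.of _

theorem toDihedralGroup_of_one : toDihedralGroup (PresentedGroup.of 1) = sr 1 :=
  PresentedGroup.toGroup.of _

theorem lift_comp_toDihedralGroup :
    (lift (of_mul_self 0) (of_mul_self 1)).comp toDihedralGroup = MonoidHom.id Z2Z2 :=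
  PresentedGroup.ext <| Fin.forall_fin_two.mpr
    ⟨by rw [MonoidHom.comp_apply, toDihedralGroup_of_zero, lift_sr_zero, MonoidHom.id_apply],
     by rw [MonoidHom.comp_apply, toDihedralGroup_of_one, lift_sr_one, MonoidHom.id_apply]⟩

theorem toDihedralGroup_comp_lift :
    toDihedralGroup.comp (lift (of_mul_self 0) (of_mul_self 1)) = MonoidHom.id _ := by
  ext g
  rw [MonoidHom.comp_apply, MonoidHom.id_apply]
  have hr1 : toDihedralGroup (PresentedGroup.of 0 * PresentedGroup.of 1) = r 1 := by
    rw [map_mul, toDihedralGroup_of_zero, toDihedralGroup_of_one, sr_mul_sr, sub_zero]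
  rcases g with (⟨i : ℤ⟩ | ⟨i : ℤ⟩)
  · rw [lift_r, map_zpow, hr1, r_one_zpow]
    rfl
  · rw [lift_sr, map_mul, map_zpow, hr1, r_one_zpow, toDihedralGroup_of_zero, sr_mul_r, zero_add]
    rfl

theorem toDihedralGroup_bijective : Function.Bijective toDihedralGroup :=
  (toDihedralGroup.toMulEquiv _ lift_comp_toDihedralGroup toDihedralGroup_comp_lift).bijective

theorem toDihedralGroup_nestedC (j : ℕ) :
    toDihedralGroup (nestedC (j + 2)) = r ((-2) ^ j * 2) := by
  have hsemiconj : Function.Semiconj toDihedralGroup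
      (fun x => gcomm x (PresentedGroup.of 0)) (fun y => gcomm y (sr 0)) := fun x => by
    rw [map_gcomm]
    exact congrArg _ toDihedralGroup_of_zero
  have hbase :
      toDihedralGroup (gcomm (PresentedGroup.of 0) (PresentedGroup.of 1)) = r 2 := by
    rw [map_gcomm, toDihedralGroup_of_zero, toDihedralGroup_of_one, gcomm_eq_commutatorElement,
      inv_sr, inv_sr, commutatorElement_sr_sr, sub_zero, mul_one]
  rw [nestedC, Nat.add_sub_cancel, hsemiconj.iterate_right, hbase, iterate_gcomm_r_sr]

end Z2Z2

open DihedralGroup Z2Z2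

/-- For every `k ≥ 2`, `γ_k(ℤ/2 * ℤ/2)` is an infinite cyclic group generated by the
left-nested commutator `(g₁, g₂, g₁, …, g₁)` of length `k`
(here `γ_k = lowerCentralSeries _ (k - 1)`). -/
theorem lcs_Z2Z2_infinite_cyclic (k : ℕ) (hk : 2 ≤ k) :
    Subgroup.lowerCentralSeries (⊤ : Subgroup Z2Z2) (k - 1) = Subgroup.zpowers (nestedC k) ∧
      ¬ IsOfFinOrder (nestedC k) := by
  obtain ⟨j, rfl⟩ : ∃ j, k = j + 2 := ⟨k - 2, by omega⟩
  have hmap : ((⊤ : Subgroup Z2Z2).lowerCentralSeries (j + 1)).map toDihedralGroup =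
      (zpowers (nestedC (j + 2))).map toDihedralGroup := by
    rw [map_lowerCentralSeries, map_top_of_surjective _ toDihedralGroup_bijective.surjective,
      lowerCentralSeries_succ_eq_zpowers_r, MonoidHom.map_zpowers,
      toDihedralGroup_nestedC, zpowers_r_neg_two_pow_mul_two]
  refine ⟨map_injective toDihedralGroup_bijective.injective hmap, fun hfin => ?_⟩
  have hrot := toDihedralGroup.isOfFinOrder hfin
  rw [toDihedralGroup_nestedC] at hrot
  exact not_isOfFinOrder_r (show (-2 : ℤ) ^ j * 2 ≠ 0 by positivity) hrot
end

section
/- Let RC_K be a right-angled Coxeter group with generators g_i. Then for all indices i, j, the congruence (g_i, g_j, g_j, g_j) ≡ (g_j, g_i, g_j)² mod (γ_2(RC_K))' holds, where commutators are left-nested. -/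
/-!
For an involution `b`, conjugation by `b` inverts `c = (a, b)`, hence `(cⁿ, b) = c⁻²ⁿ` for
every `n : ℤ`. Starting from `(a, b) = c` and `(b, a) = c⁻¹` this gives `(a, b, b) = c⁻²`,
`(a, b, b, b) = c⁴` and `(b, a, b) = c²`, so the congruence is already an equality in `RC_K`.
-/

section Involution

variable {G : Type*} [Group G]

theorem gcomm_swap (a b : G) : gcomm b a = (gcomm a b)⁻¹ := by
  simp only [gcomm, mul_inv_rev, inv_inv, mul_assoc]

variable {b : G} (hb : b * b = 1)
include hb

theorem mul_gcomm_mul_of_mul_self_eq_one (a : G) : b * gcomm a b * b = (gcomm a b)⁻¹ := by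
  have hbi : b⁻¹ = b := inv_eq_of_mul_eq_one_right hb
  simp only [gcomm, mul_inv_rev, inv_inv, hbi, mul_assoc, hb, mul_one]

theorem gcomm_zpow_of_mul_self_eq_one {c : G} (hc : b * c * b = c⁻¹) (n : ℤ) :
    gcomm (c ^ n) b = c ^ (-2 * n) := by
  have hbi : b⁻¹ = b := inv_eq_of_mul_eq_one_right hb
  have hconj : b * c ^ n * b = c ^ (-n) := by
    have h := conj_zpow (i := n) (a := b) (b := c)
    rwa [hbi, hc, inv_zpow, ← zpow_neg, eq_comm] at h
  calc gcomm (c ^ n) b = c ^ (-n) * (b * c ^ n * b) := by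
        simp only [gcomm, hbi, zpow_neg, mul_assoc]
    _ = c ^ (-2 * n) := by rw [hconj, ← zpow_add]; ring_nf

theorem gcomm_gcomm_gcomm_eq_sq_of_mul_self_eq_one (a : G) :
    gcomm (gcomm (gcomm a b) b) b = (gcomm (gcomm b a) b) ^ 2 := by
  have key := gcomm_zpow_of_mul_self_eq_one hb (mul_gcomm_mul_of_mul_self_eq_one hb a)
  have h₁ : gcomm (gcomm a b) b = gcomm a b ^ (-2 : ℤ) := by
    simpa only [zpow_one, mul_one] using key 1
  have h₂ : gcomm (gcomm b a) b = gcomm a b ^ (2 : ℤ) := by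
    rw [gcomm_swap a b, ← zpow_neg_one, key]; norm_num
  rw [h₁, h₂, key, ← zpow_natCast, ← zpow_mul]
  norm_num

end Involution

theorem RACG.of_mul_self (m : ℕ) (E : Fin m → Fin m → Prop) (i : Fin m) :
    (PresentedGroup.of i : RACG m E) * PresentedGroup.of i = 1 := by
  rw [← pow_two]
  exact PresentedGroup.one_of_mem (Or.inl ⟨i, rfl⟩)

/-- In a right-angled Coxeter group, `(g_i, g_j, g_j, g_j) ≡ (g_j, g_i, g_j)²` modulo the
derived subgroup `(γ₂)' = (RC_K', RC_K')` of the commutator subgroup. -/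
theorem comm_sq_mod_gamma2' (m : ℕ) (E : Fin m → Fin m → Prop) (i j : Fin m) :
    gcomm (gcomm (gcomm (PresentedGroup.of i : RACG m E) (PresentedGroup.of j))
        (PresentedGroup.of j)) (PresentedGroup.of j) *
      ((gcomm (gcomm (PresentedGroup.of j : RACG m E) (PresentedGroup.of i))
        (PresentedGroup.of j)) ^ 2)⁻¹ ∈
      ⁅commutator (RACG m E), commutator (RACG m E)⁆ := by
  rw [gcomm_gcomm_gcomm_eq_sq_of_mul_self_eq_one (RACG.of_mul_self m E j), mul_inv_cancel]
  exact one_mem _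
end
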